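/- Semialgebraic invariant characterization (soundness and completeness of sAI): Let f be a polynomial vector field on ℝⁿ. Let P ⊆ ℝⁿ be given in normal form by polynomials p_{ij} (0 ≤ i ≤ M, 0 ≤ j ≤ m(i)) and q_{ij} (0 ≤ i ≤ M, 0 ≤ j ≤ n(i)), i.e., P = { x : ∃ i ≤ M, ∀ j ≤ m(i), p_{ij}(x) ≥ 0 and ∀ j ≤ n(i), q_{ij}(x) > 0 }, and let the complement ℝⁿ \ P be given in normal form by polynomials r_{ij} (0 ≤ i ≤ M', 0 ≤ j ≤ a(i)) and s_{ij} (0 ≤ i ≤ M', 0 ≤ j ≤ b(i)). Fix ranks of the p_{ij}, q_{ij} with respect to f and of the r_{ij}, s_{ij} with respect to −f. Then the following are equivalent: (a) P is an invariant of x' = f(x), i.e., for every ω ∈ P, every T ≥ 0, and every solution φ : [0,T] → ℝⁿ of x' = f(x) with φ(0) = ω, one has φ(t) ∈ P for all t ∈ [0,T]; (b) for every x ∈ P there exists i ≤ M with Prog≥_f(p_{ij})(x) for all j ≤ m(i) and Prog>_f(q_{ij})(x) for all j ≤ n(i), and for every x ∉ P there exists i ≤ M' with Prog≥_{−f}(r_{ij})(x)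 for all j ≤ a(i) and Prog>_{−f}(s_{ij})(x) for all j ≤ b(i). -/

import Mathlib

/-!
Along a solution `φ`, the derivatives of `t ↦ p (φ t)` are `t ↦ (Lʲ p) (φ t)`, so just after `t₀`
the sign of `p ∘ φ` is that of the first Lie derivative not vanishing at `φ t₀`. If the first `N`
all vanish, the rank relation `Lᴺ p = ∑ gᵢ Lⁱ p` turns `(Lⁱ p ∘ φ)_{i<N}` into a solution of a
linear ODE with zero initial value, so `p ∘ φ ≡ 0` by Grönwall. Hence progress at `x` means that the
solution from `x` enters a basic piece of `P` at once, and progress along `-f` means the same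
backwards in time for `Pᶜ`. Invariance then follows by continuous induction on `[0, T]`.
Conversely, if `P` is invariant, some basic piece is met at arbitrarily small times, which forces
its progress conditions; time reversal makes `Pᶜ` invariant for `-f`.
-/

open MvPolynomial Set

/-- Lie derivative of polynomial `p` along the polynomial vector field `f`. -/
noncomputable def lieD {n : ℕ} (f : Fin n → MvPolynomial (Fin n) ℝ)
    (p : MvPolynomial (Fin n) ℝ) : MvPolynomial (Fin n) ℝ :=
  ∑ i, pderiv i p * f i

/-- `φ` is a solution of `x' = f(x)` on `[0,T]`. -/
def IsSol {n : ℕ} (f : Fin n → MvPolynomial (Fin n) ℝ) (T : ℝ)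
    (φ : ℝ → (Fin n → ℝ)) : Prop :=
  ∀ t ∈ Icc (0 : ℝ) T, HasDerivWithinAt φ (fun i => eval (φ t) (f i)) (Icc (0 : ℝ) T) t


/-- `N` is a rank of `p` with respect to `f`. -/
def IsRank {n : ℕ} (f : Fin n → MvPolynomial (Fin n) ℝ)
    (p : MvPolynomial (Fin n) ℝ) (N : ℕ) : Prop :=
  1 ≤ N ∧ ∃ g : ℕ → MvPolynomial (Fin n) ℝ,
    (lieD f)^[N] p = ∑ i ∈ Finset.range N, g i * (lieD f)^[i] p

/-- Strict progress predicate: the first significant Lie derivative is positive. -/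
def ProgGt {n : ℕ} (f : Fin n → MvPolynomial (Fin n) ℝ)
    (p : MvPolynomial (Fin n) ℝ) (N : ℕ) (ω : Fin n → ℝ) : Prop :=
  ∃ k < N, (∀ j < k, eval ω ((lieD f)^[j] p) = 0) ∧ 0 < eval ω ((lieD f)^[k] p)

/-- Weak progress predicate. -/
def ProgGe {n : ℕ} (f : Fin n → MvPolynomial (Fin n) ℝ)
    (p : MvPolynomial (Fin n) ℝ) (N : ℕ) (ω : Fin n → ℝ) : Prop :=
  ProgGt f p N ω ∨ ∀ i < N, eval ω ((lieD f)^[i] p) = 0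

open Filter Topology

theorem Icc_subset_of_forall_mem_nhdsGT_of_forall_compl_mem_nhdsLT {α : Type*}
    [ConditionallyCompleteLinearOrder α] [TopologicalSpace α] [OrderTopology α]
    [DenselyOrdered α] {a b : α} {S : Set α} (ha : a ∈ S)
    (hgt : ∀ t ∈ S ∩ Ico a b, S ∈ 𝓝[>] t) (hlt : ∀ t ∈ Sᶜ ∩ Ioc a b, Sᶜ ∈ 𝓝[<] t) :
    Icc a b ⊆ S := by
  intro x hx
  by_contra hxS
  set B := Icc a b ∩ Sᶜ
  have hBne : B.Nonempty := ⟨x, hx, hxS⟩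
  have hBbdd : BddBelow B := ⟨a, fun t ht => ht.1.1⟩
  set c := sInf B
  have hac : a ≤ c := le_csInf hBne fun t ht => ht.1.1
  have hcx : c ≤ x := csInf_le hBbdd ⟨hx, hxS⟩
  have hbelow : ∀ t ∈ Ico a c, t ∈ S := fun t ht => by
    by_contra htS
    exact (csInf_le hBbdd ⟨⟨ht.1, ht.2.le.trans (hcx.trans hx.2)⟩, htS⟩).not_gt ht.2
  by_cases hcS : c ∈ S
  · have hcx' : c < x := hcx.lt_of_ne fun h => hxS (h ▸ hcS)
    obtain ⟨u, hcu, hu⟩ :=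
      (mem_nhdsGT_iff_exists_Ioo_subset' hcx').1 (hgt c ⟨hcS, hac, hcx'.trans_le hx.2⟩)
    obtain ⟨y, hyB, hyu⟩ := exists_lt_of_csInf_lt hBne hcu
    have hcy : c < y := (csInf_le hBbdd hyB).lt_of_ne fun h => hyB.2 (h ▸ hcS)
    exact hyB.2 (hu ⟨hcy, hyu⟩)
  · have hac' : a < c := hac.lt_of_ne fun h => hcS (h ▸ ha)
    obtain ⟨l, hlc, hl⟩ :=
      (mem_nhdsLT_iff_exists_Ioo_subset' hac').1 (hlt c ⟨hcS, hac', hcx.trans hx.2⟩)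
    obtain ⟨y, hly, hyc⟩ := exists_between (max_lt hlc hac')
    exact hl ⟨(le_max_left l a).trans_lt hly, hyc⟩ (hbelow y ⟨(le_max_right l a).trans hly.le, hyc⟩)

theorem tendsto_const_sub_nhdsLT (t : ℝ) : Tendsto (fun u => t - u) (𝓝[<] t) (𝓝[>] 0) := by
  refine tendsto_nhdsWithin_of_tendsto_nhds_of_eventually_within _ ?_ ?_
  · simpa using ((continuous_sub_left t).tendsto t).mono_left nhdsWithin_le_nhds
  · exact eventually_nhdsWithin_of_forall fun u (hu : u < t) => sub_pos.2 hu

theorem eventually_pos_of_iterated_hasDerivWithinAt {g : ℕ → ℝ → ℝ} {a b t₀ : ℝ}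
    (hg : ∀ j, ∀ t ∈ Icc a b, HasDerivWithinAt (g j) (g (j + 1) t) (Icc a b) t)
    (ht₀ : t₀ ∈ Ico a b) {k : ℕ} (hzero : ∀ j < k, g j t₀ = 0) (hk : 0 < g k t₀) :
    ∀ᶠ t in 𝓝[>] t₀, 0 < g 0 t := by
  induction k generalizing g with
  | zero =>
    have hcont : ContinuousWithinAt (g 0) (Icc a b) t₀ :=
      (hg 0 t₀ (Ico_subset_Icc_self ht₀)).continuousWithinAt
    have hle : 𝓝[>] t₀ ≤ 𝓝[Icc a b] t₀ := nhdsWithin_le_of_mem <| mem_of_superset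
      (Ioo_mem_nhdsGT ht₀.2) (Ioo_subset_Icc_self.trans (Icc_subset_Icc_left ht₀.1))
    exact hle (hcont.eventually (lt_mem_nhds hk))
  | succ k ih =>
    have hderiv_pos : ∀ᶠ t in 𝓝[>] t₀, 0 < g 1 t :=
      ih (g := fun j => g (j + 1)) (fun j => hg (j + 1)) (fun j hj => hzero (j + 1) (by omega)) hk
    obtain ⟨c, hc, hsub⟩ := (mem_nhdsGT_iff_exists_Ioo_subset' ht₀.2).1 hderiv_pos
    have hc' : t₀ < min c b := lt_min hc ht₀.2
    have hIcc : Icc t₀ (min c b) ⊆ Icc a b := Icc_subset_Icc ht₀.1 (min_le_right c b)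
    have hmono : StrictMonoOn (g 0) (Icc t₀ (min c b)) := by
      refine strictMonoOn_of_hasDerivWithinAt_pos (f' := g 1) (convex_Icc _ _)
        (fun t ht => (hg 0 t (hIcc ht)).continuousWithinAt.mono hIcc) (fun t ht => ?_)
        (fun t ht => ?_) <;> simp only [interior_Icc] at ht ⊢
      · exact (hg 0 t (hIcc (Ioo_subset_Icc_self ht))).mono (Ioo_subset_Icc_self.trans hIcc)
      · exact hsub ⟨ht.1, ht.2.trans_le (min_le_left c b)⟩
    filter_upwards [Ioo_mem_nhdsGT hc'] with t ht
    rw [← hzero 0 k.succ_pos]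
    exact hmono (left_mem_Icc.2 hc'.le) (Ioo_subset_Icc_self ht) ht.1

theorem HasDerivWithinAt.eval_mvPolynomial {𝕜 σ : Type*} [NontriviallyNormedField 𝕜]
    [Fintype σ] [DecidableEq σ] {φ : 𝕜 → σ → 𝕜} {d : σ → 𝕜} {s : Set 𝕜} {t : 𝕜}
    (hφ : HasDerivWithinAt φ d s t) (p : MvPolynomial σ 𝕜) :
    HasDerivWithinAt (fun u => eval (φ u) p) (∑ i, eval (φ t) (pderiv i p) * d i) s t := by
  induction p using MvPolynomial.induction_on with
  | C a => simpa using hasDerivWithinAt_const t s a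
  | add p q hp hq =>
    simpa only [map_add, add_mul, Finset.sum_add_distrib, Pi.add_def] using hp.add hq
  | mul_X p j hp =>
    have hderiv : ∑ i, eval (φ t) (pderiv i (p * X j)) * d i =
        (∑ i, eval (φ t) (pderiv i p) * d i) * φ t j + eval (φ t) p * d j := by
      simp only [Derivation.leibniz, smul_eq_mul, pderiv_X, map_add, map_mul, eval_X, add_mul,
        Finset.sum_add_distrib, Finset.sum_mul]
      rw [add_comm]
      congr 1
      · exact Finset.sum_congr rfl fun i _ => by ring
      · simp [Pi.single_apply]
    rw [hderiv]
    simpa only [map_mul, eval_X, Pi.mul_def] using hp.mul (hasDerivWithinAt_pi.1 hφ j)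

theorem abs_eval_sum_mul_le {σ : Type*} (x : σ → ℝ) (g q : ℕ → MvPolynomial σ ℝ) (N : ℕ) :
    |eval x (∑ i ∈ Finset.range N, g i * q i)| ≤
      (∑ i ∈ Finset.range N, |eval x (g i)|) * ‖fun i : Fin N => eval x (q i)‖ := by
  rw [map_sum, Finset.sum_mul]
  refine (Finset.abs_sum_le_sum_abs _ _).trans (Finset.sum_le_sum fun i hi => ?_)
  rw [map_mul, abs_mul]
  exact mul_le_mul_of_nonneg_left
    (norm_le_pi_norm (fun i : Fin N => eval x (q i)) ⟨i, Finset.mem_range.1 hi⟩) (abs_nonneg _)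

section LieDerivative

variable {n : ℕ}

theorem lieD_neg (f : Fin n → MvPolynomial (Fin n) ℝ) (p : MvPolynomial (Fin n) ℝ) :
    lieD f (-p) = -lieD f p := by
  simp [lieD, Finset.sum_neg_distrib]

theorem lieD_iterate_neg (f : Fin n → MvPolynomial (Fin n) ℝ) (p : MvPolynomial (Fin n) ℝ)
    (j : ℕ) : (lieD f)^[j] (-p) = -(lieD f)^[j] p :=
  Function.Commute.iterate_left (lieD_neg f) j p

theorem progGt_or_progGt_neg_or_forall_eval_eq_zero (f : Fin n → MvPolynomial (Fin n) ℝ)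
    (p : MvPolynomial (Fin n) ℝ) (N : ℕ) (x : Fin n → ℝ) :
    ProgGt f p N x ∨ ProgGt f (-p) N x ∨ ∀ i < N, eval x ((lieD f)^[i] p) = 0 := by
  classical
  by_cases hall : ∀ i < N, eval x ((lieD f)^[i] p) = 0
  · exact Or.inr (Or.inr hall)
  push Not at hall
  obtain ⟨l, hlN, hl⟩ := hall
  have hex : ∃ i, eval x ((lieD f)^[i] p) ≠ 0 := ⟨l, hl⟩
  have hkN : Nat.find hex < N := (Nat.find_min' hex hl).trans_lt hlN
  have hmin : ∀ j < Nat.find hex, eval x ((lieD f)^[j] p) = 0 :=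
    fun j hj => not_not.1 (Nat.find_min hex hj)
  rcases (Nat.find_spec hex).lt_or_gt with hneg | hpos
  · refine Or.inr (Or.inl ⟨Nat.find hex, hkN, fun j hj => ?_, ?_⟩) <;>
      simp only [lieD_iterate_neg, map_neg]
    · rw [hmin j hj, neg_zero]
    · exact neg_pos.2 hneg
  · exact Or.inl ⟨Nat.find hex, hkN, hmin, hpos⟩

end LieDerivative

section Solutions

variable {n : ℕ} {f : Fin n → MvPolynomial (Fin n) ℝ} {T : ℝ} {φ : ℝ → Fin n → ℝ}

theorem IsSol.continuousOn (hsol : IsSol f T φ) : ContinuousOn φ (Icc 0 T) :=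
  fun t ht => (hsol t ht).continuousWithinAt

theorem IsSol.hasDerivWithinAt_eval_iterate (hsol : IsSol f T φ) {t : ℝ} (ht : t ∈ Icc 0 T)
    (p : MvPolynomial (Fin n) ℝ) (j : ℕ) :
    HasDerivWithinAt (fun u => eval (φ u) ((lieD f)^[j] p))
      (eval (φ t) ((lieD f)^[j + 1] p)) (Icc 0 T) t := by
  simpa [Function.iterate_succ_apply', lieD, map_sum] using
    (hsol t ht).eval_mvPolynomial ((lieD f)^[j] p)

theorem IsSol.comp_const_sub (hsol : IsSol f T φ) {t₀ : ℝ} (ht₀ : t₀ ∈ Icc 0 T) :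
    IsSol (fun l => -f l) t₀ (fun s => φ (t₀ - s)) := by
  intro t ht
  have hmaps : MapsTo (fun s => t₀ - s) (Icc 0 t₀) (Icc 0 T) := fun u hu =>
    ⟨sub_nonneg.2 hu.2, by linarith [hu.1, ht₀.2]⟩
  have hcomp := (hsol (t₀ - t) (hmaps ht)).scomp t
    ((hasDerivAt_id t).const_sub t₀).hasDerivWithinAt hmaps
  rw [neg_one_smul] at hcomp
  have hneg : (fun i => eval (φ (t₀ - t)) (-f i)) = -fun i => eval (φ (t₀ - t)) (f i) := by
    ext; simp
  show HasDerivWithinAt _ (fun i => eval (φ (t₀ - t)) (-f i)) _ _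
  rw [hneg]
  exact hcomp

theorem exists_isSol (f : Fin n → MvPolynomial (Fin n) ℝ) (x : Fin n → ℝ) :
    ∃ ε > 0, ∃ φ : ℝ → Fin n → ℝ, φ 0 = x ∧ IsSol f ε φ := by
  have hF : ContDiff ℝ 1 (fun y : Fin n → ℝ => fun i => eval y (f i)) :=
    contDiff_pi.2 fun i => (AnalyticOnNhd.eval_mvPolynomial (f i)).contDiff
  obtain ⟨φ, hφ0, ε, hε, hφ⟩ :=
    hF.contDiffAt.exists_forall_mem_closedBall_exists_eq_forall_mem_Ioo_hasDerivAt₀ (x₀ := x) 0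
  refine ⟨ε / 2, half_pos hε, φ, hφ0, fun t ht => (hφ t ⟨?_, ?_⟩).hasDerivWithinAt⟩ <;>
    linarith [ht.1, ht.2]

end Solutions

section Progress

variable {n : ℕ} {f : Fin n → MvPolynomial (Fin n) ℝ} {T t₀ : ℝ} {φ : ℝ → Fin n → ℝ}
  {p : MvPolynomial (Fin n) ℝ} {N : ℕ}

theorem IsSol.eval_eq_zero_of_isRank (hsol : IsSol f T φ) (hrank : IsRank f p N)
    (ht₀ : t₀ ∈ Icc 0 T) (h0 : ∀ i < N, eval (φ t₀) ((lieD f)^[i] p) = 0) :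
    ∀ t ∈ Icc t₀ T, eval (φ t) p = 0 := by
  obtain ⟨hN, g, hg⟩ := hrank
  set y : ℝ → Fin N → ℝ := fun t i => eval (φ t) ((lieD f)^[i] p)
  have hIcc : Icc t₀ T ⊆ Icc 0 T := Icc_subset_Icc_left ht₀.1
  obtain ⟨C, hC⟩ : BddAbove ((fun t => ∑ i ∈ Finset.range N, |eval (φ t) (g i)|) '' Icc 0 T) :=
    isCompact_Icc.bddAbove_image <| continuousOn_finsetSum _ fun i _ =>
      ((g i).continuous_eval.comp_continuousOn hsol.continuousOn).abs
  have hbound : ∀ t ∈ Icc 0 T, ∀ j ≤ N,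
      |eval (φ t) ((lieD f)^[j] p)| ≤ max 1 C * ‖y t‖ := by
    intro t ht j hj
    rcases hj.lt_or_eq with hj | rfl
    · exact (norm_le_pi_norm (y t) ⟨j, hj⟩).trans
        (le_mul_of_one_le_left (norm_nonneg _) (le_max_left 1 C))
    · rw [hg]
      exact (abs_eval_sum_mul_le (φ t) g _ j).trans <| mul_le_mul_of_nonneg_right
        ((hC (mem_image_of_mem _ ht)).trans (le_max_right 1 C)) (norm_nonneg _)
  have hy : ∀ t ∈ Icc t₀ T, y t = 0 := by
    refine eq_zero_of_abs_deriv_le_mul_abs_self_of_eq_zero_right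
      (f := y) (f' := fun t (i : Fin N) => eval (φ t) ((lieD f)^[i + 1] p)) (K := max 1 C)
      (continuousOn_pi.2 fun i => ?_) (fun t ht => ?_) (funext fun i => h0 i i.2) (fun t ht => ?_)
    · exact ((((lieD f)^[i] p).continuous_eval).comp_continuousOn hsol.continuousOn).mono hIcc
    · exact hasDerivWithinAt_pi.2 fun i =>
        (hsol.hasDerivWithinAt_eval_iterate (hIcc (Ico_subset_Icc_self ht)) p i)
          |>.mono_of_mem_nhdsWithin (Icc_mem_nhdsGE_of_mem ⟨ht₀.1.trans ht.1, ht.2⟩)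
    · exact (pi_norm_le_iff_of_nonneg (by positivity)).2 fun i =>
        hbound t (hIcc (Ico_subset_Icc_self ht)) (i + 1) i.2
  exact fun t ht => congrFun (hy t ht) ⟨0, hN⟩

theorem IsSol.eventually_pos_of_progGt (hsol : IsSol f T φ) (ht₀ : t₀ ∈ Ico 0 T)
    (h : ProgGt f p N (φ t₀)) : ∀ᶠ t in 𝓝[>] t₀, 0 < eval (φ t) p := by
  obtain ⟨k, -, hzero, hpos⟩ := h
  exact eventually_pos_of_iterated_hasDerivWithinAt (g := fun j t => eval (φ t) ((lieD f)^[j] p))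
    (fun j t ht => hsol.hasDerivWithinAt_eval_iterate ht p j) ht₀ hzero hpos

theorem IsSol.eventually_nonneg_of_progGe (hsol : IsSol f T φ) (hrank : IsRank f p N)
    (ht₀ : t₀ ∈ Ico 0 T) (h : ProgGe f p N (φ t₀)) : ∀ᶠ t in 𝓝[>] t₀, 0 ≤ eval (φ t) p := by
  rcases h with hgt | hzero
  · exact (hsol.eventually_pos_of_progGt ht₀ hgt).mono fun t ht => ht.le
  · filter_upwards [Ioc_mem_nhdsGT ht₀.2] with t ht
    exact (hsol.eval_eq_zero_of_isRank hrank (Ico_subset_Icc_self ht₀) hzero t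
      (Ioc_subset_Icc_self ht)).ge

theorem IsSol.not_progGt_neg_of_frequently_nonneg (hsol : IsSol f T φ) (ht₀ : t₀ ∈ Ico 0 T)
    (h : ∃ᶠ t in 𝓝[>] t₀, 0 ≤ eval (φ t) p) : ¬ ProgGt f (-p) N (φ t₀) := fun hneg => by
  obtain ⟨t, hnonneg, hlt⟩ := (h.and_eventually (hsol.eventually_pos_of_progGt ht₀ hneg)).exists
  rw [map_neg] at hlt
  linarith

theorem IsSol.progGe_of_frequently_nonneg (hsol : IsSol f T φ) (ht₀ : t₀ ∈ Ico 0 T)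
    (h : ∃ᶠ t in 𝓝[>] t₀, 0 ≤ eval (φ t) p) : ProgGe f p N (φ t₀) := by
  rcases progGt_or_progGt_neg_or_forall_eval_eq_zero f p N (φ t₀) with hgt | hneg | hzero
  · exact Or.inl hgt
  · exact absurd hneg (hsol.not_progGt_neg_of_frequently_nonneg ht₀ h)
  · exact Or.inr hzero

theorem IsSol.progGt_of_frequently_pos (hsol : IsSol f T φ) (hrank : IsRank f p N)
    (ht₀ : t₀ ∈ Ico 0 T) (h : ∃ᶠ t in 𝓝[>] t₀, 0 < eval (φ t) p) : ProgGt f p N (φ t₀) := by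
  rcases progGt_or_progGt_neg_or_forall_eval_eq_zero f p N (φ t₀) with hgt | hneg | hzero
  · exact hgt
  · exact absurd hneg (hsol.not_progGt_neg_of_frequently_nonneg ht₀ (h.mono fun t ht => ht.le))
  · obtain ⟨t, hpos, ht⟩ := (h.and_eventually (Ioc_mem_nhdsGT ht₀.2)).exists
    exact absurd (hsol.eval_eq_zero_of_isRank hrank (Ico_subset_Icc_self ht₀) hzero t
      (Ioc_subset_Icc_self ht)) hpos.ne'

end Progress

section NormalForm

variable {n : ℕ}

def basicSet (m k : ℕ) (p q : ℕ → MvPolynomial (Fin n) ℝ) : Set (Fin n → ℝ) :=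
  {x | (∀ j ≤ m, 0 ≤ eval x (p j)) ∧ (∀ j ≤ k, 0 < eval x (q j))}

def ProgBasic (f : Fin n → MvPolynomial (Fin n) ℝ) (m k : ℕ) (p q : ℕ → MvPolynomial (Fin n) ℝ)
    (Np Nq : ℕ → ℕ) (x : Fin n → ℝ) : Prop :=
  (∀ j ≤ m, ProgGe f (p j) (Np j) x) ∧ (∀ j ≤ k, ProgGt f (q j) (Nq j) x)

def IsSolInvariant (f : Fin n → MvPolynomial (Fin n) ℝ) (P : Set (Fin n → ℝ)) : Prop :=
  ∀ ω ∈ P, ∀ T : ℝ, 0 ≤ T → ∀ φ : ℝ → (Fin n → ℝ), IsSol f T φ → φ 0 = ω →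
    ∀ t ∈ Icc (0 : ℝ) T, φ t ∈ P

variable {f : Fin n → MvPolynomial (Fin n) ℝ} {T t₀ : ℝ} {φ : ℝ → Fin n → ℝ}
  {m k : ℕ} {p q : ℕ → MvPolynomial (Fin n) ℝ} {Np Nq : ℕ → ℕ}

theorem IsSol.eventually_mem_basicSet (hsol : IsSol f T φ) (ht₀ : t₀ ∈ Ico 0 T)
    (hrank : ∀ j ≤ m, IsRank f (p j) (Np j)) (hprog : ProgBasic f m k p q Np Nq (φ t₀)) :
    ∀ᶠ t in 𝓝[>] t₀, φ t ∈ basicSet m k p q :=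
  ((eventually_all_finite (finite_Iic m)).2 fun j hj =>
      hsol.eventually_nonneg_of_progGe (hrank j hj) ht₀ (hprog.1 j hj)).and
    ((eventually_all_finite (finite_Iic k)).2 fun j hj =>
      hsol.eventually_pos_of_progGt ht₀ (hprog.2 j hj))

theorem IsSol.progBasic_of_frequently_mem_basicSet (hsol : IsSol f T φ) (ht₀ : t₀ ∈ Ico 0 T)
    (hrank : ∀ j ≤ k, IsRank f (q j) (Nq j)) (h : ∃ᶠ t in 𝓝[>] t₀, φ t ∈ basicSet m k p q) :
    ProgBasic f m k p q Np Nq (φ t₀) :=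
  ⟨fun j hj => hsol.progGe_of_frequently_nonneg ht₀ (h.mono fun _ ht => ht.1 j hj),
    fun j hj => hsol.progGt_of_frequently_pos (hrank j hj) ht₀ (h.mono fun _ ht => ht.2 j hj)⟩

variable {M : ℕ} {m k : ℕ → ℕ} {p q : ℕ → ℕ → MvPolynomial (Fin n) ℝ} {Np Nq : ℕ → ℕ → ℕ}
  {P : Set (Fin n → ℝ)}

theorem IsSolInvariant.exists_progBasic (hinv : IsSolInvariant f P)
    (hP : P = {x | ∃ i ≤ M, x ∈ basicSet (m i) (k i) (p i) (q i)})
    (hrank : ∀ i ≤ M, ∀ j ≤ k i, IsRank f (q i j) (Nq i j)) :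
    ∀ x ∈ P, ∃ i ≤ M, ProgBasic f (m i) (k i) (p i) (q i) (Np i) (Nq i) x := by
  intro x hx
  obtain ⟨ε, hε, φ, rfl, hsol⟩ := exists_isSol f x
  have hstay : ∀ᶠ t in 𝓝[>] 0, ∃ i ∈ Iic M, φ t ∈ basicSet (m i) (k i) (p i) (q i) := by
    filter_upwards [Ioc_mem_nhdsGT hε] with t ht
    simpa [hP] using hinv _ hx ε hε.le φ hsol rfl t (Ioc_subset_Icc_self ht)
  obtain ⟨i, hi, hfreq⟩ := (frequently_exists_finite (finite_Iic M)).1 hstay.frequently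
  exact ⟨i, hi, hsol.progBasic_of_frequently_mem_basicSet ⟨le_rfl, hε⟩ (hrank i hi) hfreq⟩

theorem IsSolInvariant.compl_neg (hinv : IsSolInvariant f P) :
    IsSolInvariant (fun l => -f l) Pᶜ := by
  intro ω hω T _ ψ hψ hψ0 t ht hψt
  have hrev : IsSol f t (fun s => ψ (t - s)) := by
    simpa only [neg_neg] using hψ.comp_const_sub ht
  exact hω (by simpa [hψ0] using hinv _ hψt t ht.1 _ hrev (by simp) t ⟨ht.1, le_rfl⟩)

theorem isSolInvariant_of_forall_progBasic {M' : ℕ} {a b : ℕ → ℕ}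
    {r s : ℕ → ℕ → MvPolynomial (Fin n) ℝ} {Nr Ns : ℕ → ℕ → ℕ}
    (hP : P = {x | ∃ i ≤ M, x ∈ basicSet (m i) (k i) (p i) (q i)})
    (hPc : Pᶜ = {x | ∃ i ≤ M', x ∈ basicSet (a i) (b i) (r i) (s i)})
    (hNp : ∀ i ≤ M, ∀ j ≤ m i, IsRank f (p i j) (Np i j))
    (hNr : ∀ i ≤ M', ∀ j ≤ a i, IsRank (fun l => -f l) (r i j) (Nr i j))
    (hfwd : ∀ x ∈ P, ∃ i ≤ M, ProgBasic f (m i) (k i) (p i) (q i) (Np i) (Nq i) x)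
    (hbwd : ∀ x ∉ P, ∃ i ≤ M',
      ProgBasic (fun l => -f l) (a i) (b i) (r i) (s i) (Nr i) (Ns i) x) :
    IsSolInvariant f P := by
  intro ω hω T _ φ hsol hφ0
  refine Icc_subset_of_forall_mem_nhdsGT_of_forall_compl_mem_nhdsLT (S := φ ⁻¹' P)
    (by rwa [mem_preimage, hφ0]) ?_ ?_
  · rintro t ⟨htP, htI⟩
    obtain ⟨i, hi, hprog⟩ := hfwd _ htP
    filter_upwards [hsol.eventually_mem_basicSet htI (hNp i hi) hprog] with u hu
    rw [mem_preimage, hP]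
    exact ⟨i, hi, hu⟩
  · rintro t ⟨htP, htI⟩
    obtain ⟨i, hi, hprog⟩ := hbwd _ htP
    have hrev := hsol.comp_const_sub (Ioc_subset_Icc_self htI)
    have hback := hrev.eventually_mem_basicSet ⟨le_rfl, htI.1⟩ (hNr i hi)
      (by simpa only [sub_zero] using hprog)
    filter_upwards [(tendsto_const_sub_nhdsLT t).eventually hback] with u hu
    rw [sub_sub_cancel] at hu
    show φ u ∈ Pᶜ
    rw [hPc]
    exact ⟨i, hi, hu⟩

end NormalForm

theorem sAI_char_general {n : ℕ} (f : Fin n → MvPolynomial (Fin n) ℝ)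
    (M : ℕ) (m k : ℕ → ℕ)
    (p q : ℕ → ℕ → MvPolynomial (Fin n) ℝ) (Np Nq : ℕ → ℕ → ℕ)
    (M' : ℕ) (a b : ℕ → ℕ)
    (r s : ℕ → ℕ → MvPolynomial (Fin n) ℝ) (Nr Ns : ℕ → ℕ → ℕ)
    (hNp : ∀ i ≤ M, ∀ j ≤ m i, IsRank f (p i j) (Np i j))
    (hNq : ∀ i ≤ M, ∀ j ≤ k i, IsRank f (q i j) (Nq i j))
    (hNr : ∀ i ≤ M', ∀ j ≤ a i, IsRank (fun l => -f l) (r i j) (Nr i j))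
    (hNs : ∀ i ≤ M', ∀ j ≤ b i, IsRank (fun l => -f l) (s i j) (Ns i j))
    (P : Set (Fin n → ℝ))
    (hP : P = {x | ∃ i ≤ M, (∀ j ≤ m i, 0 ≤ eval x (p i j)) ∧
        (∀ j ≤ k i, 0 < eval x (q i j))})
    (hPc : Pᶜ = {x | ∃ i ≤ M', (∀ j ≤ a i, 0 ≤ eval x (r i j)) ∧
        (∀ j ≤ b i, 0 < eval x (s i j))}) :
    (∀ ω ∈ P, ∀ T : ℝ, 0 ≤ T → ∀ φ : ℝ → (Fin n → ℝ), IsSol f T φ → φ 0 = ω →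
        ∀ t ∈ Icc (0 : ℝ) T, φ t ∈ P)
    ↔ ((∀ x ∈ P, ∃ i ≤ M, (∀ j ≤ m i, ProgGe f (p i j) (Np i j) x) ∧
          (∀ j ≤ k i, ProgGt f (q i j) (Nq i j) x)) ∧
       (∀ x ∉ P, ∃ i ≤ M', (∀ j ≤ a i, ProgGe (fun l => -f l) (r i j) (Nr i j) x) ∧
          (∀ j ≤ b i, ProgGt (fun l => -f l) (s i j) (Ns i j) x))) := by
  change IsSolInvariant f P ↔ _
  refine ⟨fun hinv => ⟨hinv.exists_progBasic hP hNq, hinv.compl_neg.exists_progBasic hPc hNs⟩,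
    fun ⟨hfwd, hbwd⟩ => isSolInvariant_of_forall_progBasic hP hPc hNp hNr hfwd hbwd⟩

/-- Semialgebraic invariant characterization (soundness and completeness of sAI). -/
theorem sAI_char {n : ℕ} (hn : 1 ≤ n) (f : Fin n → MvPolynomial (Fin n) ℝ)
    (M : ℕ) (m k : ℕ → ℕ)
    (p q : ℕ → ℕ → MvPolynomial (Fin n) ℝ) (Np Nq : ℕ → ℕ → ℕ)
    (M' : ℕ) (a b : ℕ → ℕ)
    (r s : ℕ → ℕ → MvPolynomial (Fin n) ℝ) (Nr Ns : ℕ → ℕ → ℕ)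
    (hNp : ∀ i ≤ M, ∀ j ≤ m i, IsRank f (p i j) (Np i j))
    (hNq : ∀ i ≤ M, ∀ j ≤ k i, IsRank f (q i j) (Nq i j))
    (hNr : ∀ i ≤ M', ∀ j ≤ a i, IsRank (fun l => -f l) (r i j) (Nr i j))
    (hNs : ∀ i ≤ M', ∀ j ≤ b i, IsRank (fun l => -f l) (s i j) (Ns i j))
    (P : Set (Fin n → ℝ))
    (hP : P = {x | ∃ i ≤ M, (∀ j ≤ m i, 0 ≤ eval x (p i j)) ∧
        (∀ j ≤ k i, 0 < eval x (q i j))})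
    (hPc : Pᶜ = {x | ∃ i ≤ M', (∀ j ≤ a i, 0 ≤ eval x (r i j)) ∧
        (∀ j ≤ b i, 0 < eval x (s i j))}) :
    (∀ ω ∈ P, ∀ T : ℝ, 0 ≤ T → ∀ φ : ℝ → (Fin n → ℝ), IsSol f T φ → φ 0 = ω →
        ∀ t ∈ Icc (0 : ℝ) T, φ t ∈ P)
    ↔ ((∀ x ∈ P, ∃ i ≤ M, (∀ j ≤ m i, ProgGe f (p i j) (Np i j) x) ∧
          (∀ j ≤ k i, ProgGt f (q i j) (Nq i j) x)) ∧
       (∀ x ∉ P, ∃ i ≤ M', (∀ j ≤ a i, ProgGe (fun l => -f l) (r i j) (Nr i j) x) ∧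
          (∀ j ≤ b i, ProgGt (fun l => -f l) (s i j) (Ns i j) x))) :=
  sAI_char_general f M m k p q Np Nq M' a b r s Nr Ns hNp hNq hNr hNs P hP hPc
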